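/- Correctness of the separating automaton: with A_sep defined from A_max and A_min (satisfying ⟦A_max⟧ ≤ ⟦A_min⟧), final states F_sep = {(R, F, t) : R ∩ F ≠ ∅} with final weight ⟦A_max⟧(t), one has ⟦A_max⟧(s) ≤ ⟦A_sep⟧(s) ≤ ⟦A_min⟧(s) for all terms s (with ⟦A_sep⟧(s) = ⊥ exactly when both sides are ⊥). -/

import Mathlib

/-- A ranked alphabet: symbols with arities. -/
structure RankedAlphabet where
  symb : Type
  ar : symb → ℕ

/-- Terms (finite ranked trees) over a ranked alphabet. -/
inductive Term (A : RankedAlphabet) : Type where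
  | node (a : A.symb) (ts : Fin (A.ar a) → Term A) : Term A

/-- Height of a term: length of the longest branch. -/
def Term.height {A : RankedAlphabet} : Term A → ℕ
  | .node _ ts => Finset.univ.sup fun i => (ts i).height + 1

/-- Size of a term: number of nodes. -/
def Term.size {A : RankedAlphabet} : Term A → ℕ
  | .node _ ts => 1 + ∑ i, (ts i).size

/-- A nondeterministic tree automaton with real weights on transitions and final states. -/
structure WTA (A : RankedAlphabet) (Q : Type) where
  trans : (a : A.symb) → (Fin (A.ar a) → Q) → Q → Prop
  wt : (a : A.symb) → (Fin (A.ar a) → Q) → Q → ℝ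
  final : Q → Prop
  fwt : Q → ℝ

/-- Runs of an automaton over a term, reaching a given state at the root. -/
inductive RunOf {A : RankedAlphabet} {Q : Type} (M : WTA A Q) : Term A → Q → Type where
  | node (a : A.symb) (ts : Fin (A.ar a) → Term A) (qs : Fin (A.ar a) → Q) (q : Q)
      (hq : M.trans a qs q) (rs : ∀ i, RunOf M (ts i) (qs i)) : RunOf M (.node a ts) q

/-- The weight of a run: sum of the weights of the transitions used. -/
def RunOf.wt {A : RankedAlphabet} {Q : Type} {M : WTA A Q} :
    {t : Term A} → {q : Q} → RunOf M t q → ℝ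
  | _, _, .node a _ qs q _ rs => (∑ i, (rs i).wt) + M.wt a qs q

/-- Contexts: terms with exactly one hole. -/
inductive Ctx (A : RankedAlphabet) : Type where
  | hole : Ctx A
  | node (a : A.symb) (i : Fin (A.ar a)) (c : Ctx A) (ts : Fin (A.ar a) → Term A) : Ctx A

/-- Plugging a term into the hole of a context. -/
def Ctx.plug {A : RankedAlphabet} : Ctx A → Term A → Term A
  | .hole, t => t
  | .node a i c ts, t => .node a (Function.update ts i (c.plug t))

/-- Composition of contexts: plugging the second context into the hole of the first. -/
def Ctx.comp {A : RankedAlphabet} : Ctx A → Ctx A → Ctx A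
  | .hole, d => d
  | .node a i c ts, d => .node a i (c.comp d) ts

/-- Iterated composition of a context with itself. -/
def Ctx.pow {A : RankedAlphabet} (m : Ctx A) : ℕ → Ctx A
  | 0 => .hole
  | n + 1 => m.comp (m.pow n)

/-- Runs over a context, from a state (at the hole) to a state (at the root). -/
inductive CRun {A : RankedAlphabet} {Q : Type} (M : WTA A Q) : Ctx A → Q → Q → Type where
  | hole (p : Q) : CRun M .hole p p
  | node (a : A.symb) (i : Fin (A.ar a)) (c : Ctx A) (ts : Fin (A.ar a) → Term A)
      (qs : Fin (A.ar a) → Q) (p q : Q)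
      (hq : M.trans a qs q)
      (hc : CRun M c p (qs i))
      (rs : ∀ j, j ≠ i → RunOf M (ts j) (qs j)) : CRun M (.node a i c ts) p q

/-- The weight of a run over a context. -/
def CRun.wt {A : RankedAlphabet} {Q : Type} {M : WTA A Q} :
    {c : Ctx A} → {p q : Q} → CRun M c p q → ℝ
  | _, _, _, .hole _ => 0
  | _, _, _, .node a i _ _ qs _ q _ hc rs =>
      (∑ j : {j // j ≠ i}, (rs j.1 j.2).wt) + M.wt a qs q + hc.wt

/-- Gluing a run over a context with a run over a term yields a run over the plugged term. -/
def CRun.glue {A : RankedAlphabet} {Q : Type} {M : WTA A Q} {t : Term A} :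
    {c : Ctx A} → {p q : Q} → CRun M c p q → RunOf M t p → RunOf M (c.plug t) q
  | _, _, _, .hole _, r => r
  | _, _, _, .node a i c ts qs _ q hq hc rs, r =>
      .node a (Function.update ts i (c.plug t)) qs q hq
        (fun j =>
          if h : j = i then
            cast (by subst h; rw [Function.update_self]) (CRun.glue hc r)
          else
            cast (congrArg (fun s => RunOf M s (qs j))
              (Function.update_of_ne h (c.plug t) ts).symm) (rs j h))

/-- Gluing runs over composed contexts. -/
def CRun.cglue {A : RankedAlphabet} {Q : Type} {M : WTA A Q} {d : Ctx A} {p : Q} :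
    {c : Ctx A} → {q r : Q} → CRun M c q r → CRun M d p q → CRun M (c.comp d) p r
  | _, _, _, .hole _, rd => rd
  | _, _, _, .node a i c ts qs _ r hq hc rs, rd =>
      .node a i (c.comp d) ts qs p r hq (hc.cglue rd) rs

/-- The `n`-fold iteration of a loop run over a context. -/
def CRun.pow {A : RankedAlphabet} {Q : Type} {M : WTA A Q} {m : Ctx A} {q : Q}
    (σ : CRun M m q q) : (n : ℕ) → CRun M (m.pow n) q q
  | 0 => .hole q
  | n + 1 => σ.cglue (σ.pow n)

/-- `x` is the weight of some accepting run of `M` over `t`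
(weight of the run plus the final-state weight). -/
def AccWeight {A : RankedAlphabet} {Q : Type} (M : WTA A Q) (t : Term A) (x : ℝ) : Prop :=
  ∃ (q : Q) (r : RunOf M t q), M.final q ∧ r.wt + M.fwt q = x

/-- `M` has some accepting run over `t`. -/
def HasAcc {A : RankedAlphabet} {Q : Type} (M : WTA A Q) (t : Term A) : Prop :=
  ∃ x, AccWeight M t x

/-- `f` is the max-plus semantics of `M`: `f t = ⊥` iff there is no accepting run,
and otherwise `f t` is the maximum weight of an accepting run. -/
def ComputesMax {A : RankedAlphabet} {Q : Type} (M : WTA A Q) (f : Term A → Option ℝ) : Prop :=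
  ∀ t, (f t = none ↔ ¬ HasAcc M t) ∧
    ∀ x, f t = some x → AccWeight M t x ∧ ∀ y, AccWeight M t y → y ≤ x

/-- `f` is the min-plus semantics of `M`. -/
def ComputesMin {A : RankedAlphabet} {Q : Type} (M : WTA A Q) (f : Term A → Option ℝ) : Prop :=
  ∀ t, (f t = none ↔ ¬ HasAcc M t) ∧
    ∀ x, f t = some x → AccWeight M t x ∧ ∀ y, AccWeight M t y → x ≤ y

/-- An automaton is unambiguous if every term has at most one accepting run. -/
def Unambiguous {A : RankedAlphabet} {Q : Type} (M : WTA A Q) : Prop :=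
  ∀ (t : Term A) (q q' : Q) (r : RunOf M t q) (r' : RunOf M t q'),
    M.final q → M.final q' → q = q' ∧ HEq r r'

/-- The order on `ℝ ∪ {⊥}` in which `⊥` is comparable only with itself. -/
def OLe : Option ℝ → Option ℝ → Prop
  | none, none => True
  | some x, some y => x ≤ y
  | _, _ => False

/-- Shifting a value of `ℝ ∪ {⊥}` by a real number. -/
def oshift (u : Option ℝ) (x : ℝ) : Option ℝ := u.map (· + x)

/-- The set of states reachable at the root by some run over `t`. -/
def reachSet {A : RankedAlphabet} {Q : Type} (M : WTA A Q) (t : Term A) : Set Q :=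
  {q | Nonempty (RunOf M t q)}

/-- The set of states at the hole from which there is an accepting run over the context `c`. -/
def prodSet {A : RankedAlphabet} {Q : Type} (M : WTA A Q) (c : Ctx A) : Set Q :=
  {p | ∃ q, M.final q ∧ Nonempty (CRun M c p q)}

section Bi
variable {A : RankedAlphabet} {Q1 Q2 : Type} (M1 : WTA A Q1) (M2 : WTA A Q2)

/-- Reachable states of the disjoint union of the two automata. -/
def biReach (t : Term A) : Set (Q1 ⊕ Q2) :=
  Sum.inl '' reachSet M1 t ∪ Sum.inr '' reachSet M2 t

/-- Productive states of the disjoint union of the two automata. -/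
def biProd (c : Ctx A) : Set (Q1 ⊕ Q2) :=
  Sum.inl '' prodSet M1 c ∪ Sum.inr '' prodSet M2 c

/-- Final states of the disjoint union of the two automata. -/
def biFinal : Set (Q1 ⊕ Q2) :=
  Sum.inl '' {q | M1.final q} ∪ Sum.inr '' {q | M2.final q}

/-- Transition relation of the disjoint union of the two automata. -/
def biTrans (a : A.symb) (qs : Fin (A.ar a) → Q1 ⊕ Q2) (q : Q1 ⊕ Q2) : Prop :=
  (∃ (qs' : Fin (A.ar a) → Q1) (q' : Q1),
      qs = Sum.inl ∘ qs' ∧ q = Sum.inl q' ∧ M1.trans a qs' q') ∨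
  (∃ (qs' : Fin (A.ar a) → Q2) (q' : Q2),
      qs = Sum.inr ∘ qs' ∧ q = Sum.inr q' ∧ M2.trans a qs' q')

/-- The family `Reachable` of sets of states of the form `Reach(t)`. -/
def ReachableSets : Set (Set (Q1 ⊕ Q2)) := {S | ∃ t, biReach M1 M2 t = S}

/-- The family `Productive` of sets of states of the form `Prod(c)`. -/
def ProductiveSets : Set (Set (Q1 ⊕ Q2)) := {S | ∃ c, biProd M1 M2 c = S}

/-- `t` refines `s` for `P` with shift `x`. -/
def Refines (P : Set (Q1 ⊕ Q2)) (t s : Term A) (x : ℝ) : Prop :=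
  biReach M1 M2 s = biReach M1 M2 t ∧
  (∀ p : Q1, Sum.inl p ∈ P → ∀ ρ : RunOf M1 s p, ∃ ρ' : RunOf M1 t p, ρ.wt ≤ ρ'.wt + x) ∧
  (∀ q : Q2, Sum.inr q ∈ P → ∀ τ : RunOf M2 s q, ∃ τ' : RunOf M2 t q, τ'.wt + x ≤ τ.wt)

end Bi

/-- Transitions of the product automaton `A_pro`, relative to a transition relation `Δ`. -/
def ProTrans {A : RankedAlphabet} {Q : Type}
    (Δ : ∀ a : A.symb, (Fin (A.ar a) → Q) → Q → Prop) (a : A.symb)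
    (RPs : Fin (A.ar a) → Set Q × Set Q) (RP : Set Q × Set Q) : Prop :=
  RP.1 = {r | ∃ rs, Δ a rs r ∧ ∀ j, rs j ∈ (RPs j).1} ∧
  ∀ i, (RPs i).2 =
    {ri | ∃ rs p, Δ a rs p ∧ rs i = ri ∧ (∀ j, j ≠ i → rs j ∈ (RPs j).1) ∧ p ∈ RP.2}

section Asep
variable {A : RankedAlphabet} {Q1 Q2 : Type} (M1 : WTA A Q1) (M2 : WTA A Q2)

/-- A state `(R, P, t)` of the separating automaton is well-formed if `R ∈ Reachable`,
`P ∈ Productive`, `Reach(t) = R` and `height(t) ≤ k`. -/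
def GoodState (k : ℕ) (S : Set (Q1 ⊕ Q2) × Set (Q1 ⊕ Q2) × Term A) : Prop :=
  S.1 ∈ ReachableSets M1 M2 ∧ S.2.1 ∈ ProductiveSets M1 M2 ∧
  biReach M1 M2 S.2.2 = S.1 ∧ S.2.2.height ≤ k

/-- The map `sr` is a valid refinement map: for every productive-set `P` and every term
`s`, `sr P s = (t, x)` where `t` has height at most `k` and refines `s` for `P` with
shift `x`. -/
def GoodSr (k : ℕ) (sr : Set (Q1 ⊕ Q2) → Term A → Term A × ℝ) : Prop :=
  ∀ P ∈ ProductiveSets M1 M2, ∀ s : Term A,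
    ((sr P s).1).height ≤ k ∧ Refines M1 M2 P (sr P s).1 s (sr P s).2

/-- The separating automaton `A_sep`: states are triples `(R, P, t)`, transitions follow
the product automaton `A_pro` on the first two components and apply the refinement map
`sr_P` on the third component, with the shift as transition weight; final states are the
`(R, F, t)` with `R ∩ F ≠ ∅`, of final weight `⟦A_max⟧(t)`. -/
noncomputable def Asep (k : ℕ) (sr : Set (Q1 ⊕ Q2) → Term A → Term A × ℝ) :
    WTA A (Set (Q1 ⊕ Q2) × Set (Q1 ⊕ Q2) × Term A) where
  trans a sts out :=
    GoodState M1 M2 k out ∧ (∀ i, GoodState M1 M2 k (sts i)) ∧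
    ProTrans (biTrans M1 M2) a (fun i => ((sts i).1, (sts i).2.1)) (out.1, out.2.1) ∧
    out.2.2 = (sr out.2.1 (Term.node a fun i => (sts i).2.2)).1
  wt a sts out := (sr out.2.1 (Term.node a fun i => (sts i).2.2)).2
  final S := S.2.1 = biFinal M1 M2 ∧ (S.1 ∩ biFinal M1 M2).Nonempty
  fwt S := sSup {x | AccWeight M1 S.2.2 x}

end Asep

/-! A run of `A_sep` over `s` ending in `(R, P, t)` has `R = Reach(s)`, and `t` refines `s`
for `P` with the weight of the run as shift: the refinement map contributes its shift at each
node, and refinements of the children combine into one of the node because `A_pro` hands each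
child exactly the states from which a transition leads into `P`. Following `A_pro` with
`P = Prod(c)` for the surrounding context, every term has a run into some `(Reach(s), F, t)`.
For an accepting run of weight `w`, refinement for `F` moves the best `A_max`-run on `s` to a run
on `t` of weight at least `⟦A_max⟧(s) - w`, and every accepting `A_min`-run on `s` to one of weight
at most `⟦A_min⟧(s) - w`; with `⟦A_max⟧(t) ≤ ⟦A_min⟧(t)` this gives
`⟦A_max⟧(s) ≤ w + ⟦A_max⟧(t) ≤ ⟦A_min⟧(s)`. -/

section DisjointUnion

variable {A : RankedAlphabet} {Q Q1 Q2 : Type} {M : WTA A Q} {M1 : WTA A Q1} {M2 : WTA A Q2}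

@[simp] lemma inl_mem_biReach {t : Term A} {q : Q1} :
    Sum.inl q ∈ biReach M1 M2 t ↔ q ∈ reachSet M1 t := by
  simp [biReach]

@[simp] lemma inr_mem_biReach {t : Term A} {q : Q2} :
    Sum.inr q ∈ biReach M1 M2 t ↔ q ∈ reachSet M2 t := by
  simp [biReach]

@[simp] lemma inl_mem_biProd {c : Ctx A} {p : Q1} :
    Sum.inl p ∈ biProd M1 M2 c ↔ p ∈ prodSet M1 c := by
  simp [biProd]

@[simp] lemma inr_mem_biProd {c : Ctx A} {p : Q2} :
    Sum.inr p ∈ biProd M1 M2 c ↔ p ∈ prodSet M2 c := by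
  simp [biProd]

@[simp] lemma inl_mem_biFinal {q : Q1} : Sum.inl q ∈ biFinal M1 M2 ↔ M1.final q := by
  simp [biFinal]

@[simp] lemma inr_mem_biFinal {q : Q2} : Sum.inr q ∈ biFinal M1 M2 ↔ M2.final q := by
  simp [biFinal]

lemma biTrans_inl {a : A.symb} {qs : Fin (A.ar a) → Q1 ⊕ Q2} {q : Q1} :
    biTrans M1 M2 a qs (.inl q) ↔ ∃ qs', Sum.inl ∘ qs' = qs ∧ M1.trans a qs' q := by
  simp [biTrans, eq_comm]

lemma biTrans_inr {a : A.symb} {qs : Fin (A.ar a) → Q1 ⊕ Q2} {q : Q2} :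
    biTrans M1 M2 a qs (.inr q) ↔ ∃ qs', Sum.inr ∘ qs' = qs ∧ M2.trans a qs' q := by
  simp [biTrans, eq_comm]

lemma exists_biTrans_iff {a : A.symb} {P : (Fin (A.ar a) → Q1 ⊕ Q2) → Q1 ⊕ Q2 → Prop} :
    (∃ qs q, biTrans M1 M2 a qs q ∧ P qs q) ↔
      (∃ qs q, M1.trans a qs q ∧ P (Sum.inl ∘ qs) (.inl q)) ∨
        (∃ qs q, M2.trans a qs q ∧ P (Sum.inr ∘ qs) (.inr q)) := by
  simp only [biTrans]
  grind

lemma reachSet_node {a : A.symb} {ts : Fin (A.ar a) → Term A} :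
    reachSet M (.node a ts) = {q | ∃ qs, M.trans a qs q ∧ ∀ i, qs i ∈ reachSet M (ts i)} := by
  ext q
  constructor
  · rintro ⟨⟨_, _, qs, _, hq, rs⟩⟩
    exact ⟨qs, hq, fun i => ⟨rs i⟩⟩
  · rintro ⟨qs, hq, hrs⟩
    exact ⟨.node a ts qs q hq fun i => (hrs i).some⟩

lemma biReach_node {a : A.symb} {ts : Fin (A.ar a) → Term A} :
    biReach M1 M2 (.node a ts)
      = {q | ∃ qs, biTrans M1 M2 a qs q ∧ ∀ i, qs i ∈ biReach M1 M2 (ts i)} := by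
  ext (q | q) <;> simp [reachSet_node, biTrans_inl, biTrans_inr, and_comm]

lemma CRun.eq_of_hole {p q : Q} (r : CRun M .hole p q) : p = q := by
  cases r; rfl

lemma prodSet_hole : prodSet M .hole = {p | M.final p} := by
  ext p
  constructor
  · rintro ⟨q, hq, ⟨r⟩⟩
    rwa [r.eq_of_hole]
  · exact fun hp => ⟨p, hp, ⟨.hole p⟩⟩

lemma biProd_hole : biProd M1 M2 .hole = biFinal M1 M2 := by
  simp [biProd, biFinal, prodSet_hole]

lemma nonempty_cRun_comp_iff {c d : Ctx A} {p r : Q} :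
    Nonempty (CRun M (c.comp d) p r) ↔
      ∃ q, Nonempty (CRun M d p q) ∧ Nonempty (CRun M c q r) := by
  refine ⟨fun hne => ?_, fun ⟨q, ⟨rd⟩, ⟨rc⟩⟩ => ⟨rc.cglue rd⟩⟩
  induction c generalizing r with
  | hole => exact ⟨r, hne, ⟨.hole r⟩⟩
  | node a i c ts ih =>
    obtain ⟨ρ⟩ := hne
    cases ρ with
    | node _ _ _ _ qs _ _ hq hc rs =>
      obtain ⟨q, hd, ⟨hc'⟩⟩ := ih ⟨hc⟩
      exact ⟨q, hd, ⟨.node a i c ts qs q r hq hc' rs⟩⟩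

lemma nonempty_cRun_node_hole_iff {a : A.symb} {i : Fin (A.ar a)}
    {ts : Fin (A.ar a) → Term A} {p q : Q} :
    Nonempty (CRun M (.node a i .hole ts) p q) ↔
      ∃ qs, M.trans a qs q ∧ qs i = p ∧ ∀ j, j ≠ i → qs j ∈ reachSet M (ts j) := by
  constructor
  · rintro ⟨ρ⟩
    cases ρ with
    | node _ _ _ _ qs _ _ hq hc rs => exact ⟨qs, hq, hc.eq_of_hole.symm, fun j hj => ⟨rs j hj⟩⟩
  · rintro ⟨qs, hq, rfl, hrs⟩
    exact ⟨.node a i .hole ts qs (qs i) q hq (.hole (qs i)) fun j hj => (hrs j hj).some⟩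

lemma prodSet_comp_node_hole {c : Ctx A} {a : A.symb} {i : Fin (A.ar a)}
    {ts : Fin (A.ar a) → Term A} :
    prodSet M (c.comp (.node a i .hole ts)) =
      {p | ∃ qs q, M.trans a qs q ∧ qs i = p ∧
        (∀ j, j ≠ i → qs j ∈ reachSet M (ts j)) ∧ q ∈ prodSet M c} := by
  ext p
  simp only [prodSet, Set.mem_ofPred_eq, nonempty_cRun_comp_iff, nonempty_cRun_node_hole_iff]
  grind

lemma biProd_comp_node_hole {c : Ctx A} {a : A.symb} {i : Fin (A.ar a)}
    {ts : Fin (A.ar a) → Term A} :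
    biProd M1 M2 (c.comp (.node a i .hole ts)) =
      {p | ∃ qs q, biTrans M1 M2 a qs q ∧ qs i = p ∧
        (∀ j, j ≠ i → qs j ∈ biReach M1 M2 (ts j)) ∧ q ∈ biProd M1 M2 c} := by
  ext p
  rw [Set.mem_ofPred, exists_biTrans_iff]
  cases p <;> simp [prodSet_comp_node_hole]

lemma biReach_inter_biFinal_nonempty_iff {s : Term A} :
    (biReach M1 M2 s ∩ biFinal M1 M2).Nonempty ↔ HasAcc M1 s ∨ HasAcc M2 s := by
  constructor
  · rintro ⟨q | q, hqR, hqF⟩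
    · obtain ⟨ρ⟩ := inl_mem_biReach.1 hqR
      exact .inl ⟨_, q, ρ, inl_mem_biFinal.1 hqF, rfl⟩
    · obtain ⟨ρ⟩ := inr_mem_biReach.1 hqR
      exact .inr ⟨_, q, ρ, inr_mem_biFinal.1 hqF, rfl⟩
  · rintro (⟨-, q, ρ, hq, -⟩ | ⟨-, q, ρ, hq, -⟩)
    · exact ⟨.inl q, inl_mem_biReach.2 ⟨ρ⟩, inl_mem_biFinal.2 hq⟩
    · exact ⟨.inr q, inr_mem_biReach.2 ⟨ρ⟩, inr_mem_biFinal.2 hq⟩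

end DisjointUnion

section Semantics

variable {A : RankedAlphabet} {Q : Type} {M : WTA A Q} {f : Term A → Option ℝ}

lemma ComputesMax.exists_eq_some (hf : ComputesMax M f) {t : Term A} (ht : HasAcc M t) :
    ∃ x, f t = some x :=
  Option.ne_none_iff_exists'.1 fun h => (hf t).1.1 h ht

lemma ComputesMin.exists_eq_some (hf : ComputesMin M f) {t : Term A} (ht : HasAcc M t) :
    ∃ x, f t = some x :=
  Option.ne_none_iff_exists'.1 fun h => (hf t).1.1 h ht

lemma ComputesMax.sSup_accWeight_eq (hf : ComputesMax M f) {t : Term A} {x : ℝ}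
    (hx : f t = some x) : sSup {y | AccWeight M t y} = x := by
  obtain ⟨hacc, hmax⟩ := (hf t).2 x hx
  exact le_antisymm (csSup_le ⟨x, hacc⟩ hmax) (le_csSup ⟨x, hmax⟩ hacc)

end Semantics

namespace Refines

variable {A : RankedAlphabet} {Q1 Q2 : Type} {M1 : WTA A Q1} {M2 : WTA A Q2}
  {P : Set (Q1 ⊕ Q2)}

lemma trans {t u s : Term A} {x y : ℝ}
    (htu : Refines M1 M2 P t u y) (hus : Refines M1 M2 P u s x) :
    Refines M1 M2 P t s (x + y) := by
  refine ⟨hus.1.trans htu.1, fun p hp ρ => ?_, fun q hq τ => ?_⟩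
  · obtain ⟨ρ', h'⟩ := hus.2.1 p hp ρ
    obtain ⟨ρ'', h''⟩ := htu.2.1 p hp ρ'
    exact ⟨ρ'', by linarith⟩
  · obtain ⟨τ', h'⟩ := hus.2.2 q hq τ
    obtain ⟨τ'', h''⟩ := htu.2.2 q hq τ'
    exact ⟨τ'', by linarith⟩

lemma node {a : A.symb} {ss ts : Fin (A.ar a) → Term A}
    {Ps : Fin (A.ar a) → Set (Q1 ⊕ Q2)} {xs : Fin (A.ar a) → ℝ}
    (hPs : ∀ i, {p | ∃ qs q, biTrans M1 M2 a qs q ∧ qs i = p ∧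
        (∀ j, j ≠ i → qs j ∈ biReach M1 M2 (ss j)) ∧ q ∈ P} ⊆ Ps i)
    (hts : ∀ i, Refines M1 M2 (Ps i) (ts i) (ss i) (xs i)) :
    Refines M1 M2 P (.node a ts) (.node a ss) (∑ i, xs i) := by
  have hreach : ∀ i, biReach M1 M2 (ss i) = biReach M1 M2 (ts i) := fun i => (hts i).1
  refine ⟨by simp only [biReach_node, hreach], ?_, ?_⟩
  · rintro p hp ⟨_, _, qs, _, hq, rs⟩
    have hqs : ∀ i, Sum.inl (qs i) ∈ Ps i := fun i =>
      hPs i ⟨Sum.inl ∘ qs, .inl p, biTrans_inl.2 ⟨qs, rfl, hq⟩, rfl,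
        fun j _ => inl_mem_biReach.2 ⟨rs j⟩, hp⟩
    choose rs' hrs' using fun i => (hts i).2.1 (qs i) (hqs i) (rs i)
    refine ⟨.node a ts qs p hq rs', ?_⟩
    have := Finset.sum_le_sum fun i (_ : i ∈ Finset.univ) => hrs' i
    simp only [RunOf.wt, Finset.sum_add_distrib] at this ⊢
    linarith
  · rintro q hq ⟨_, _, qs, _, hq', rs⟩
    have hqs : ∀ i, Sum.inr (qs i) ∈ Ps i := fun i =>
      hPs i ⟨Sum.inr ∘ qs, .inr q, biTrans_inr.2 ⟨qs, rfl, hq'⟩, rfl,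
        fun j _ => inr_mem_biReach.2 ⟨rs j⟩, hq⟩
    choose rs' hrs' using fun i => (hts i).2.2 (qs i) (hqs i) (rs i)
    refine ⟨.node a ts qs q hq' rs', ?_⟩
    have := Finset.sum_le_sum fun i (_ : i ∈ Finset.univ) => hrs' i
    simp only [RunOf.wt, Finset.sum_add_distrib] at this ⊢
    linarith

lemma exists_accWeight_left {t s : Term A} {w x : ℝ}
    (hts : Refines M1 M2 (biFinal M1 M2) t s w) (hx : AccWeight M1 s x) :
    ∃ x', AccWeight M1 t x' ∧ x ≤ x' + w := by
  obtain ⟨q, ρ, hq, rfl⟩ := hx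
  obtain ⟨ρ', hρ'⟩ := hts.2.1 q (inl_mem_biFinal.2 hq) ρ
  exact ⟨_, ⟨q, ρ', hq, rfl⟩, by linarith⟩

lemma exists_accWeight_right {t s : Term A} {w y : ℝ}
    (hts : Refines M1 M2 (biFinal M1 M2) t s w) (hy : AccWeight M2 s y) :
    ∃ y', AccWeight M2 t y' ∧ y' + w ≤ y := by
  obtain ⟨q, τ, hq, rfl⟩ := hy
  obtain ⟨τ', hτ'⟩ := hts.2.2 q (inr_mem_biFinal.2 hq) τ
  exact ⟨_, ⟨q, τ', hq, rfl⟩, by linarith⟩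

end Refines

section SeparatingAutomaton

variable {A : RankedAlphabet} {Q1 Q2 : Type} {M1 : WTA A Q1} {M2 : WTA A Q2}
  {k : ℕ} {sr : Set (Q1 ⊕ Q2) → Term A → Term A × ℝ}

lemma RunOf.asep_goodState {s : Term A} {S : Set (Q1 ⊕ Q2) × Set (Q1 ⊕ Q2) × Term A}
    (ρ : RunOf (Asep M1 M2 k sr) s S) : GoodState M1 M2 k S := by
  cases ρ with
  | node _ _ _ _ hq _ => exact hq.1

lemma RunOf.asep_refines (hsr : GoodSr M1 M2 k sr) {s : Term A}
    {S : Set (Q1 ⊕ Q2) × Set (Q1 ⊕ Q2) × Term A} (ρ : RunOf (Asep M1 M2 k sr) s S) :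
    S.1 = biReach M1 M2 s ∧ Refines M1 M2 S.2.1 S.2.2 s ρ.wt := by
  induction ρ with
  | node a ss Ss S hS ρs ih =>
    have ⟨hgood, _, ⟨hreach, hprod⟩, ht⟩ := hS
    dsimp only at hreach hprod
    have hreach_ss : ∀ j, (Ss j).1 = biReach M1 M2 (ss j) := fun j => (ih j).1
    refine ⟨by simp only [hreach, biReach_node, hreach_ss], ?_⟩
    have hnode : Refines M1 M2 S.2.1 (.node a fun i => (Ss i).2.2) (.node a ss)
        (∑ i, (ρs i).wt) :=
      Refines.node (fun i => by simp only [hprod i, hreach_ss]; rfl) fun i => (ih i).2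
    have hsr_S := (hsr _ hgood.2.1 (.node a fun i => (Ss i).2.2)).2
    rw [← ht] at hsr_S
    exact hsr_S.trans hnode

lemma exists_asep_run (hsr : GoodSr M1 M2 k sr) (s : Term A) {P : Set (Q1 ⊕ Q2)}
    (hP : P ∈ ProductiveSets M1 M2) :
    ∃ t, Nonempty (RunOf (Asep M1 M2 k sr) s (biReach M1 M2 s, P, t)) := by
  induction s generalizing P with
  | node a ss ih =>
    obtain ⟨c, rfl⟩ := hP
    choose ts ρs using fun i => ih i ⟨c.comp (.node a i .hole ss), rfl⟩
    let Ss i := (biReach M1 M2 (ss i), biProd M1 M2 (c.comp (.node a i .hole ss)), ts i)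
    let ρ i : RunOf (Asep M1 M2 k sr) (ss i) (Ss i) := (ρs i).some
    have hreach : ∀ i, biReach M1 M2 (ss i) = biReach M1 M2 (ts i) :=
      fun i => ((ρ i).asep_refines hsr).2.1
    let s' : Term A := .node a ts
    obtain ⟨hheight, hrefines⟩ := hsr _ ⟨c, rfl⟩ s'
    have hreach' : biReach M1 M2 (sr (biProd M1 M2 c) s').1 = biReach M1 M2 (.node a ss) := by
      rw [← hrefines.1]
      simp only [s', biReach_node, hreach]
    refine ⟨_, ⟨.node a ss Ss _ ⟨⟨⟨_, rfl⟩, ⟨c, rfl⟩, hreach', hheight⟩,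
      fun i => (ρ i).asep_goodState, ⟨biReach_node, fun i => biProd_comp_node_hole⟩, rfl⟩ ρ⟩⟩

lemma hasAcc_asep_iff (hsr : GoodSr M1 M2 k sr) {s : Term A} :
    HasAcc (Asep M1 M2 k sr) s ↔ HasAcc M1 s ∨ HasAcc M2 s := by
  rw [← biReach_inter_biFinal_nonempty_iff]
  constructor
  · rintro ⟨-, S, ρ, ⟨-, hS⟩, -⟩
    rwa [(ρ.asep_refines hsr).1] at hS
  · intro hs
    obtain ⟨t, ⟨ρ⟩⟩ := exists_asep_run hsr s ⟨.hole, biProd_hole⟩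
    exact ⟨_, _, ρ, ⟨rfl, hs⟩, rfl⟩

lemma asep_accWeight_bounds {f g : Term A → Option ℝ} (hf : ComputesMax M1 f)
    (hg : ComputesMin M2 g) (hle : ∀ t, OLe (f t) (g t)) (hsr : GoodSr M1 M2 k sr)
    {s : Term A} {x y z : ℝ} (hx : f s = some x) (hy : g s = some y)
    (hz : AccWeight (Asep M1 M2 k sr) s z) : x ≤ z ∧ z ≤ y := by
  obtain ⟨S, ρ, hS, rfl⟩ := hz
  have hts : Refines M1 M2 (biFinal M1 M2) S.2.2 s ρ.wt := hS.1 ▸ (ρ.asep_refines hsr).2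
  obtain ⟨x', hx', hxx'⟩ := hts.exists_accWeight_left ((hf s).2 x hx).1
  obtain ⟨y', hy', hyy'⟩ := hts.exists_accWeight_right ((hg s).2 y hy).1
  obtain ⟨v, hv⟩ := hf.exists_eq_some ⟨x', hx'⟩
  obtain ⟨u, hu⟩ := hg.exists_eq_some ⟨y', hy'⟩
  have hx'v : x' ≤ v := ((hf _).2 v hv).2 x' hx'
  have huy' : u ≤ y' := ((hg _).2 u hu).2 y' hy'
  have hvu : v ≤ u := by simpa only [hv, hu, OLe] using hle S.2.2
  have hfwt : (Asep M1 M2 k sr).fwt S = v := hf.sSup_accWeight_eq hv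
  rw [hfwt]
  constructor <;> linarith

end SeparatingAutomaton

theorem asep_correct_general {A : RankedAlphabet} {Q1 Q2 : Type}
    (M1 : WTA A Q1) (M2 : WTA A Q2)
    (f g : Term A → Option ℝ)
    (hf : ComputesMax M1 f) (hg : ComputesMin M2 g)
    (hle : ∀ t, OLe (f t) (g t))
    (k : ℕ) (sr : Set (Q1 ⊕ Q2) → Term A → Term A × ℝ)
    (hsr : GoodSr M1 M2 k sr)
    (h : Term A → Option ℝ) (hh : ComputesMax (Asep M1 M2 k sr) h) :
    (∀ s, OLe (f s) (h s)) ∧ (∀ s, OLe (h s) (g s)) := by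
  refine forall_and.1 fun s => ?_
  have hs := hle s
  rcases hfs : f s with _ | x <;> rcases hgs : g s with _ | y <;> rw [hfs, hgs] at hs
  · have hhs : h s = none := (hh s).1.2 fun hacc =>
      ((hasAcc_asep_iff hsr).1 hacc).elim ((hf s).1.1 hfs) ((hg s).1.1 hgs)
    simp only [hhs, OLe, and_self]
  · exact hs.elim
  · exact hs.elim
  · obtain ⟨z, hhs⟩ := hh.exists_eq_some ((hasAcc_asep_iff hsr).2 (.inl ⟨x, ((hf s).2 x hfs).1⟩))
    rw [hhs]
    exact asep_accWeight_bounds hf hg hle hsr hfs hgs ((hh s).2 z hhs).1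

/-- correctness of the separating automaton: if `A_max` computes `f`,
`A_min` computes `g`, `f ≤ g`, and `sr` is a valid refinement map, then the semantics `h`
of `A_sep` satisfies `f ≤ h ≤ g` (in the order where `⊥` is comparable only with itself,
so `h s = ⊥` exactly when both sides are `⊥`). -/
theorem asep_correct {A : RankedAlphabet} {Q1 Q2 : Type}
    [Fintype Q1] [Fintype Q2] (M1 : WTA A Q1) (M2 : WTA A Q2)
    (f g : Term A → Option ℝ)
    (hf : ComputesMax M1 f) (hg : ComputesMin M2 g)
    (hle : ∀ t, OLe (f t) (g t))
    (k : ℕ) (sr : Set (Q1 ⊕ Q2) → Term A → Term A × ℝ)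
    (hsr : GoodSr M1 M2 k sr)
    (h : Term A → Option ℝ) (hh : ComputesMax (Asep M1 M2 k sr) h) :
    (∀ s, OLe (f s) (h s)) ∧ (∀ s, OLe (h s) (g s)) :=
  asep_correct_general M1 M2 f g hf hg hle k sr hsr h hh
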